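/- arXiv:1803.00642 — 2 statements merged into one kernel-verified Lean document; each statement's English description precedes it below -/
import Mathlib

section
/- Let s ≥ 1, let 𝒜 ∈ ℝ^{s×s} be invertible and 𝐛 ∈ ℝ^s, with stability function r(z) = 1 + z 𝐛ᵀ(I − z𝒜)⁻¹𝟙 and 𝐪(z) = 𝐛ᵀ(I − z𝒜)⁻¹. Assume every eigenvalue of 𝒜⁻¹ has positive real part, and that |r(z)| ≤ 1 for all z with Re z ≤ 0 (A-stability). Then there exist constants γ ≥ 1, b > 0 and C_q > 0 such that |r(z)| ≤ e^{γ Re z} for all z with 0 ≤ Re z ≤ b, and ‖𝐪(z)‖ ≤ C_q for all z with Re z ≤ b. -/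
open Matrix Real

/-- Complexification of a real matrix. -/
def cmat {s : ℕ} (A : Matrix (Fin s) (Fin s) ℝ) : Matrix (Fin s) (Fin s) ℂ :=
  A.map (fun a => (a : ℂ))

/-- The stability function `r(z) = 1 + z bᵀ(I - zA)⁻¹𝟙` of a Runge--Kutta method. -/
noncomputable def rkStab {s : ℕ} (A : Matrix (Fin s) (Fin s) ℝ) (b : Fin s → ℝ) (z : ℂ) : ℂ :=
  1 + z * ((fun i => (b i : ℂ)) ⬝ᵥ ((1 - z • cmat A)⁻¹ *ᵥ (fun _ => 1)))

/-- The row vector `q(z) = bᵀ(I - zA)⁻¹`, as an element of Euclidean space. -/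
noncomputable def rkQ {s : ℕ} (A : Matrix (Fin s) (Fin s) ℝ) (b : Fin s → ℝ) (z : ℂ) :
    EuclideanSpace ℂ (Fin s) :=
  (WithLp.equiv 2 (Fin s → ℂ)).symm (Matrix.vecMul (fun i => (b i : ℂ)) (1 - z • cmat A)⁻¹)

set_option maxHeartbeats 1000000

lemma cmat_det_isUnit {s : ℕ} {A : Matrix (Fin s) (Fin s) ℝ} (hA : IsUnit A.det) :
    IsUnit (cmat A).det := by
  have h : (cmat A).det = ((A.det : ℝ) : ℂ) := ((Complex.ofRealHom).map_det A).symm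
  rw [h]
  exact hA.map Complex.ofRealHom

lemma inv_entry {s : ℕ} (M : Matrix (Fin s) (Fin s) ℂ) (i j : Fin s) :
    M⁻¹ i j = (M.det)⁻¹ * M.adjugate i j := by
  rw [Matrix.inv_def, Matrix.smul_apply, smul_eq_mul, Ring.inverse_eq_inv']

/-- Sum of absolute values of the entries of a complex matrix. -/
noncomputable def absSum {s : ℕ} (M : Matrix (Fin s) (Fin s) ℂ) : ℝ :=
  ∑ i, ∑ j, ‖M i j‖

lemma entry_le_absSum {s : ℕ} (M : Matrix (Fin s) (Fin s) ℂ) (i j : Fin s) :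
    ‖M i j‖ ≤ absSum M := by
  unfold absSum
  have h1 : ‖M i j‖ ≤ ∑ j', ‖M i j'‖ :=
    Finset.single_le_sum (fun _ _ => norm_nonneg _) (Finset.mem_univ j)
  refine h1.trans (Finset.single_le_sum (f := fun i' => ∑ j', ‖M i' j'‖)
    (fun i' _ => Finset.sum_nonneg fun _ _ => norm_nonneg _) (Finset.mem_univ i))

lemma resolvent_scaling {s : ℕ} {A : Matrix (Fin s) (Fin s) ℝ} {z : ℂ} (hz0 : z ≠ 0)
    (hu : IsUnit (1 - z • cmat A).det) :
    (1 - z • cmat A)⁻¹ = (-z⁻¹) • (cmat A - z⁻¹ • 1)⁻¹ := by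
  have hfac : (1 : Matrix (Fin s) (Fin s) ℂ) - z • cmat A = (-z) • (cmat A - z⁻¹ • 1) := by
    rw [smul_sub, smul_smul, neg_mul, mul_inv_cancel₀ hz0, neg_smul, neg_smul, one_smul,
      sub_neg_eq_add, neg_add_eq_sub]
  have hu2 : IsUnit (cmat A - z⁻¹ • 1).det := by
    have h : (1 - z • cmat A).det = (-z) ^ (Fintype.card (Fin s)) * (cmat A - z⁻¹ • 1).det := by
      rw [hfac, Matrix.det_smul]
    rw [h] at hu
    exact isUnit_of_mul_isUnit_right hu
  apply Matrix.inv_eq_right_inv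
  rw [hfac, Matrix.smul_mul, Matrix.mul_smul, smul_smul, Matrix.mul_nonsing_inv _ hu2,
    neg_mul_neg, mul_inv_cancel₀ hz0, one_smul]

lemma resolvent_bdd {s : ℕ} {A : Matrix (Fin s) (Fin s) ℝ} (hA : IsUnit A.det) {bb : ℝ}
    (hu : ∀ z : ℂ, z.re ≤ bb → IsUnit (1 - z • cmat A).det) :
    ∃ Cf : ℝ, 1 ≤ Cf ∧ ∀ z : ℂ, z.re ≤ bb → ∀ i j,
      ‖(1 - z • cmat A)⁻¹ i j‖ ≤ Cf := by
  have hdetA := cmat_det_isUnit hA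
  have hMc : Continuous (fun z : ℂ => 1 - z • cmat A) :=
    continuous_const.sub (continuous_id.smul continuous_const)
  -- continuity of φ on S
  have hφcont : ContinuousOn (fun z => absSum (1 - z • cmat A)⁻¹) {z : ℂ | z.re ≤ bb} := by
    apply continuousOn_finset_sum
    intro i _
    apply continuousOn_finset_sum
    intro j _
    have hc : ContinuousOn (fun z : ℂ => ((1 - z • cmat A).det)⁻¹
        * (1 - z • cmat A).adjugate i j) {z : ℂ | z.re ≤ bb} := by
      refine ContinuousOn.mul (ContinuousOn.inv₀ hMc.matrix_det.continuousOn ?_)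
        (hMc.matrix_adjugate.matrix_elem i j).continuousOn
      intro z hz
      exact (hu z hz).ne_zero
    have hc2 : ContinuousOn (fun z : ℂ => (1 - z • cmat A)⁻¹ i j) {z : ℂ | z.re ≤ bb} := by
      simpa only [inv_entry] using hc
    exact continuous_norm.comp_continuousOn hc2
  have hψ0 : absSum ((-(0:ℂ)) • (cmat A - (0:ℂ) • 1)⁻¹) = 0 := by
    simp [absSum]
  have hNc : Continuous (fun w : ℂ => cmat A - w • 1) :=
    continuous_const.sub (continuous_id.smul continuous_const)
  have hdet0 : (cmat A - (0 : ℂ) • 1).det ≠ 0 := by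
    simpa using hdetA.ne_zero
  have hψcont : ContinuousAt (fun w : ℂ => absSum ((-w) • (cmat A - w • 1)⁻¹)) 0 := by
    apply tendsto_finset_sum
    intro i _
    apply tendsto_finset_sum
    intro j _
    have h1 : ContinuousAt (fun w : ℂ =>
        (-w) * (((cmat A - w • 1).det)⁻¹ * (cmat A - w • 1).adjugate i j)) 0 :=
      (continuousAt_id.neg).mul
        ((hNc.matrix_det.continuousAt.inv₀ hdet0).mul
          (hNc.matrix_adjugate.matrix_elem i j).continuousAt)
    have h2 : ContinuousAt (fun w : ℂ => ‖((-w) • (cmat A - w • 1)⁻¹) i j‖) 0 := by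
      simp only [Matrix.smul_apply, smul_eq_mul, inv_entry]
      exact continuous_norm.continuousAt.comp h1
    exact h2
  obtain ⟨δ, hδpos, hδ⟩ := Metric.continuousAt_iff.mp hψcont 1 one_pos
  have hRpos : 0 < δ⁻¹ := inv_pos.mpr hδpos
  have hSclosed : IsClosed {z : ℂ | z.re ≤ bb} := isClosed_le Complex.continuous_re continuous_const
  have hK : IsCompact ({z : ℂ | z.re ≤ bb} ∩ Metric.closedBall 0 δ⁻¹) :=
    (isCompact_closedBall (0 : ℂ) δ⁻¹).inter_left hSclosed
  obtain ⟨C, hC⟩ := hK.exists_bound_of_continuousOn (hφcont.mono Set.inter_subset_left)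
  refine ⟨max C 1, le_max_right _ _, ?_⟩
  intro z hz i j
  by_cases hzR : ‖z‖ ≤ δ⁻¹
  · have hzK : z ∈ {z : ℂ | z.re ≤ bb} ∩ Metric.closedBall 0 δ⁻¹ := by
      refine ⟨hz, ?_⟩
      simpa [Metric.mem_closedBall, Complex.dist_eq] using hzR
    have hb := hC z hzK
    rw [Real.norm_eq_abs] at hb
    exact le_max_of_le_left ((entry_le_absSum _ i j).trans ((le_abs_self _).trans hb))
  · have hzabs : δ⁻¹ < ‖z‖ := lt_of_not_ge hzR
    have hz0 : z ≠ 0 := by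
      intro h
      rw [h] at hzabs
      simp at hzabs
      exact absurd hzabs (not_lt.mpr hδpos.le)
    have hid := resolvent_scaling hz0 (hu z hz)
    have hdist : dist z⁻¹ 0 < δ := by
      rw [Complex.dist_eq, sub_zero, norm_inv]
      calc ‖z‖⁻¹ < (δ⁻¹)⁻¹ := inv_strictAnti₀ hRpos hzabs
        _ = δ := inv_inv δ
    have hsmall := hδ hdist
    rw [hψ0, Real.dist_eq, sub_zero] at hsmall
    have hφle : absSum (1 - z • cmat A)⁻¹ ≤ 1 := by
      rw [hid]
      exact (le_abs_self _).trans hsmall.le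
    exact le_max_of_le_right ((entry_le_absSum _ i j).trans hφle)

lemma unit_of_not_spec {s : ℕ} {A : Matrix (Fin s) (Fin s) ℝ} (hA : IsUnit A.det)
    {z : ℂ} (hz : z ∉ spectrum ℂ (cmat A)⁻¹) :
    IsUnit (1 - z • cmat A).det := by
  have hdet := cmat_det_isUnit hA
  have h1 : IsUnit (z • (1 : Matrix (Fin s) (Fin s) ℂ) - (cmat A)⁻¹) := by
    have := spectrum.notMem_iff.mp hz
    rwa [Algebra.algebraMap_eq_smul_one] at this
  have h2 : IsUnit ((cmat A)⁻¹ - z • 1).det := by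
    have h : (cmat A)⁻¹ - z • 1 = -(z • 1 - (cmat A)⁻¹) := (neg_sub _ _).symm
    rw [h, Matrix.det_neg]
    exact (isUnit_one.neg.pow (Fintype.card (Fin s))).mul
      ((Matrix.isUnit_iff_isUnit_det _).mp h1)
  have h3 : (1 : Matrix (Fin s) (Fin s) ℂ) - z • cmat A = cmat A * ((cmat A)⁻¹ - z • 1) := by
    rw [Matrix.mul_sub, Matrix.mul_smul, mul_one, Matrix.mul_nonsing_inv _ hdet]
  rw [h3, Matrix.det_mul]
  exact hdet.mul h2

lemma resolvent_diff {s : ℕ} (M : Matrix (Fin s) (Fin s) ℂ) {z w : ℂ}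
    (hz : IsUnit (1 - z • M).det) (hw : IsUnit (1 - w • M).det) :
    z • (1 - z • M)⁻¹ - w • (1 - w • M)⁻¹
      = (z - w) • ((1 - z • M)⁻¹ * (1 - w • M)⁻¹) := by
  set B := 1 - z • M with hB
  set C := 1 - w • M with hC
  have hB' : B⁻¹ * B = 1 := Matrix.nonsing_inv_mul _ hz
  have hC' : C * C⁻¹ = 1 := Matrix.mul_nonsing_inv _ hw
  have e3 : z • C - w • B = (z - w) • (1 : Matrix (Fin s) (Fin s) ℂ) := by
    rw [hB, hC, smul_sub, smul_sub, smul_smul, smul_smul, mul_comm z w, sub_smul]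
    abel
  calc z • B⁻¹ - w • C⁻¹
      = B⁻¹ * (z • C) * C⁻¹ - B⁻¹ * (w • B) * C⁻¹ := by
        rw [Matrix.mul_smul, Matrix.smul_mul, mul_assoc, hC', mul_one,
          Matrix.mul_smul, Matrix.smul_mul, hB', one_mul]
    _ = B⁻¹ * (z • C - w • B) * C⁻¹ := by rw [← Matrix.sub_mul, ← Matrix.mul_sub]
    _ = (z - w) • (B⁻¹ * C⁻¹) := by
        rw [e3, Matrix.mul_smul, mul_one, Matrix.smul_mul]

lemma rkStab_diff {s : ℕ} (A : Matrix (Fin s) (Fin s) ℝ) (b : Fin s → ℝ) {z w : ℂ}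
    (hz : IsUnit (1 - z • cmat A).det) (hw : IsUnit (1 - w • cmat A).det) :
    rkStab A b z - rkStab A b w
      = (z - w) * ((fun i => (b i : ℂ)) ⬝ᵥ
          (((1 - z • cmat A)⁻¹ * (1 - w • cmat A)⁻¹) *ᵥ (fun _ => 1))) := by
  have h := resolvent_diff (cmat A) hz hw
  unfold rkStab
  have key : ∀ u : ℂ, ∀ N : Matrix (Fin s) (Fin s) ℂ,
      u * ((fun i => (b i : ℂ)) ⬝ᵥ (N *ᵥ (fun _ => 1)))
        = (fun i => (b i : ℂ)) ⬝ᵥ ((u • N) *ᵥ (fun _ => 1)) := by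
    intro u N
    rw [Matrix.smul_mulVec, dotProduct_smul, smul_eq_mul]
  rw [add_sub_add_left_eq_sub, key z, key w, key (z - w), ← h,
    Matrix.sub_mulVec, dotProduct_sub]

theorem rk_stability_bounds
    (s : ℕ) (hs : 1 ≤ s)
    (A : Matrix (Fin s) (Fin s) ℝ) (hA : IsUnit A.det)
    (b : Fin s → ℝ)
    (heig : ∀ μ ∈ spectrum ℂ (cmat A)⁻¹, 0 < μ.re)
    (hstab : ∀ z : ℂ, z.re ≤ 0 → ‖rkStab A b z‖ ≤ 1) :
    ∃ γ bb Cq : ℝ, 1 ≤ γ ∧ 0 < bb ∧ 0 < Cq ∧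
      (∀ z : ℂ, 0 ≤ z.re → z.re ≤ bb →
        ‖rkStab A b z‖ ≤ Real.exp (γ * z.re)) ∧
      (∀ z : ℂ, z.re ≤ bb → ‖rkQ A b z‖ ≤ Cq) := by
  have hfin : (spectrum ℂ (cmat A)⁻¹).Finite := Matrix.finite_spectrum _
  -- choose the half-plane bound bb
  obtain ⟨bb, hbbpos, hbblt⟩ :
      ∃ bb : ℝ, 0 < bb ∧ ∀ μ ∈ spectrum ℂ (cmat A)⁻¹, bb < μ.re := by
    by_cases h : hfin.toFinset.Nonempty
    · have hinfpos : 0 < hfin.toFinset.inf' h fun μ => μ.re := by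
        rw [Finset.lt_inf'_iff]
        intro μ hμ
        exact heig μ (hfin.mem_toFinset.mp hμ)
      refine ⟨(hfin.toFinset.inf' h fun μ => μ.re) / 2, by linarith, ?_⟩
      intro μ hμ
      have h2 : (hfin.toFinset.inf' h fun ν => ν.re) ≤ μ.re :=
        Finset.inf'_le _ (hfin.mem_toFinset.mpr hμ)
      linarith
    · refine ⟨1, one_pos, fun μ hμ => absurd ⟨μ, hfin.mem_toFinset.mpr hμ⟩ h⟩
  have hunit : ∀ z : ℂ, z.re ≤ bb → IsUnit (1 - z • cmat A).det := by
    intro z hz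
    refine unit_of_not_spec hA (fun hmem => ?_)
    exact absurd (hbblt z hmem) (not_lt.mpr hz)
  obtain ⟨Cf, hCf1, hCf⟩ := resolvent_bdd hA hunit
  have hCf0 : 0 < Cf := lt_of_lt_of_le one_pos hCf1
  set Bsum : ℝ := ∑ i, |b i| with hBsum
  have hBsum0 : 0 ≤ Bsum := Finset.sum_nonneg fun _ _ => abs_nonneg _
  set L : ℝ := Bsum * ((s : ℝ) * ((s : ℝ) * (Cf * Cf))) with hL
  have hL0 : 0 ≤ L := by positivity
  set Cq : ℝ := Real.sqrt s * (Bsum * Cf) + 1 with hCq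
  have hCq0 : 0 < Cq := by positivity
  refine ⟨max 1 L, bb, Cq, le_max_left _ _, hbbpos, hCq0, ?_, ?_⟩
  · -- stability bound on the strip
    intro z hz0 hzbb
    have hz_unit := hunit z hzbb
    set w : ℂ := z - (z.re : ℂ) with hwdef
    have hwre : w.re = 0 := by simp [hwdef]
    have hwle : w.re ≤ bb := by rw [hwre]; exact hbbpos.le
    have hw_unit := hunit w hwle
    have hdiff := rkStab_diff A b hz_unit hw_unit
    have hzw : z - w = (z.re : ℂ) := by rw [hwdef]; ring
    -- bound entries of the matrix product
    have habs_entry : ∀ i j : Fin s,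
        ‖((1 - z • cmat A)⁻¹ * (1 - w • cmat A)⁻¹) i j‖
          ≤ (s : ℝ) * (Cf * Cf) := by
      intro i j
      rw [Matrix.mul_apply]
      calc ‖∑ k, (1 - z • cmat A)⁻¹ i k * (1 - w • cmat A)⁻¹ k j‖
          ≤ ∑ k, ‖(1 - z • cmat A)⁻¹ i k * (1 - w • cmat A)⁻¹ k j‖ :=
            norm_sum_le _ _
        _ ≤ ∑ _k : Fin s, Cf * Cf := Finset.sum_le_sum (fun k _ => by
              rw [norm_mul]
              exact mul_le_mul (hCf z hzbb i k) (hCf w hwle k j)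
                (norm_nonneg _) hCf0.le)
        _ = (s : ℝ) * (Cf * Cf) := by
              rw [Finset.sum_const, Finset.card_univ, Fintype.card_fin, nsmul_eq_mul]
    have hmv : ∀ i : Fin s,
        ‖(((1 - z • cmat A)⁻¹ * (1 - w • cmat A)⁻¹) *ᵥ (fun _ => (1:ℂ))) i‖
          ≤ (s : ℝ) * ((s : ℝ) * (Cf * Cf)) := by
      intro i
      simp only [Matrix.mulVec, dotProduct, mul_one]
      calc ‖∑ j, ((1 - z • cmat A)⁻¹ * (1 - w • cmat A)⁻¹) i j‖
          ≤ ∑ j, ‖((1 - z • cmat A)⁻¹ * (1 - w • cmat A)⁻¹) i j‖ :=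
            norm_sum_le _ _
        _ ≤ ∑ _j : Fin s, (s : ℝ) * (Cf * Cf) :=
            Finset.sum_le_sum (fun j _ => habs_entry i j)
        _ = (s : ℝ) * ((s : ℝ) * (Cf * Cf)) := by
              rw [Finset.sum_const, Finset.card_univ, Fintype.card_fin, nsmul_eq_mul]
    have hD : ‖(fun i => (b i : ℂ)) ⬝ᵥ
        (((1 - z • cmat A)⁻¹ * (1 - w • cmat A)⁻¹) *ᵥ (fun _ => 1))‖ ≤ L := by
      simp only [dotProduct]
      calc ‖∑ i, (b i : ℂ) *
            ((((1 - z • cmat A)⁻¹ * (1 - w • cmat A)⁻¹) *ᵥ (fun _ => 1)) i)‖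
          ≤ ∑ i, ‖(b i : ℂ) *
            ((((1 - z • cmat A)⁻¹ * (1 - w • cmat A)⁻¹) *ᵥ (fun _ => 1)) i)‖ :=
            norm_sum_le _ _
        _ ≤ ∑ i, |b i| * ((s : ℝ) * ((s : ℝ) * (Cf * Cf))) :=
            Finset.sum_le_sum (fun i _ => by
              rw [norm_mul, Complex.norm_real, Real.norm_eq_abs]
              exact mul_le_mul_of_nonneg_left (hmv i) (abs_nonneg _))
        _ = L := by rw [← Finset.sum_mul]
    have h1 : ‖rkStab A b z - rkStab A b w‖ ≤ z.re * L := by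
      rw [hdiff, norm_mul, hzw, Complex.norm_real, Real.norm_eq_abs, abs_of_nonneg hz0]
      exact mul_le_mul_of_nonneg_left hD hz0
    have h2 : ‖rkStab A b w‖ ≤ 1 := hstab w (le_of_eq hwre)
    have h3 : ‖rkStab A b z‖ ≤ 1 + z.re * L := by
      have e : rkStab A b z = rkStab A b w + (rkStab A b z - rkStab A b w) := by ring
      calc ‖rkStab A b z‖
          = ‖rkStab A b w + (rkStab A b z - rkStab A b w)‖ := by rw [← e]
        _ ≤ ‖rkStab A b w‖ + ‖rkStab A b z - rkStab A b w‖ :=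
            norm_add_le _ _
        _ ≤ 1 + z.re * L := add_le_add h2 h1
    have h4 : 1 + z.re * L ≤ Real.exp (z.re * L) := by
      have := Real.add_one_le_exp (z.re * L)
      linarith
    have h5 : Real.exp (z.re * L) ≤ Real.exp (max 1 L * z.re) := by
      apply Real.exp_le_exp.mpr
      rw [mul_comm]
      exact mul_le_mul_of_nonneg_right (le_max_right 1 L) hz0
    exact h3.trans (h4.trans h5)
  · -- bound on q
    intro z hzbb
    have hcomp : ∀ j : Fin s,
        ‖(Matrix.vecMul (fun i => (b i : ℂ)) (1 - z • cmat A)⁻¹) j‖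
          ≤ Bsum * Cf := by
      intro j
      simp only [Matrix.vecMul, dotProduct]
      calc ‖∑ i, (b i : ℂ) * (1 - z • cmat A)⁻¹ i j‖
          ≤ ∑ i, ‖(b i : ℂ) * (1 - z • cmat A)⁻¹ i j‖ := norm_sum_le _ _
        _ ≤ ∑ i, |b i| * Cf := Finset.sum_le_sum (fun i _ => by
              rw [norm_mul, Complex.norm_real, Real.norm_eq_abs]
              exact mul_le_mul_of_nonneg_left (hCf z hzbb i j) (abs_nonneg _))
        _ = Bsum * Cf := by rw [← Finset.sum_mul]
    have hnorm : ‖rkQ A b z‖ ≤ Real.sqrt s * (Bsum * Cf) := by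
      rw [rkQ, EuclideanSpace.norm_eq]
      have hBC : 0 ≤ Bsum * Cf := mul_nonneg hBsum0 hCf0.le
      have hsum : (∑ j, ‖(WithLp.equiv 2 (Fin s → ℂ)).symm
          (Matrix.vecMul (fun i => (b i : ℂ)) (1 - z • cmat A)⁻¹) j‖ ^ 2)
            ≤ (s : ℝ) * (Bsum * Cf) ^ 2 := by
        calc (∑ j, ‖(WithLp.equiv 2 (Fin s → ℂ)).symm
            (Matrix.vecMul (fun i => (b i : ℂ)) (1 - z • cmat A)⁻¹) j‖ ^ 2)
            ≤ ∑ _j : Fin s, (Bsum * Cf) ^ 2 := by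
              refine Finset.sum_le_sum (fun j _ => ?_)
              have hj := hcomp j
              have : ‖(WithLp.equiv 2 (Fin s → ℂ)).symm
                  (Matrix.vecMul (fun i => (b i : ℂ)) (1 - z • cmat A)⁻¹) j‖
                    ≤ Bsum * Cf := by
                exact hj
              exact pow_le_pow_left₀ (norm_nonneg _) this 2
          _ = (s : ℝ) * (Bsum * Cf) ^ 2 := by
              rw [Finset.sum_const, Finset.card_univ, Fintype.card_fin, nsmul_eq_mul]
      calc Real.sqrt (∑ j, ‖(WithLp.equiv 2 (Fin s → ℂ)).symm
          (Matrix.vecMul (fun i => (b i : ℂ)) (1 - z • cmat A)⁻¹) j‖ ^ 2)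
          ≤ Real.sqrt ((s : ℝ) * (Bsum * Cf) ^ 2) := Real.sqrt_le_sqrt hsum
        _ = Real.sqrt s * (Bsum * Cf) := by
            rw [Real.sqrt_mul (Nat.cast_nonneg s), Real.sqrt_sq hBC]
    calc ‖rkQ A b z‖ ≤ Real.sqrt s * (Bsum * Cf) := hnorm
      _ ≤ Cq := by rw [hCq]; linarith
end

section
/- Let s ≥ 1, let 𝒜 ∈ ℝ^{s×s} be invertible and 𝐛 ∈ ℝ^s with 𝐛ᵀ𝒜⁻¹𝟙 = 1, and assume every eigenvalue of 𝒜⁻¹ has positive real part. With r(z) = 1 + z 𝐛ᵀ(I − z𝒜)⁻¹𝟙, 𝐪(z) = 𝐛ᵀ(I − z𝒜)⁻¹, 𝐞ₙ(z) = r(z)ⁿ𝐪(z) for n ≥ 0, E₀(z) = 𝒜(I − z𝒜)⁻¹ and Eₙ(z) = r(z)^{n−1}(I − z𝒜)⁻¹𝟙𝐪(z) for n ≥ 1, there exist constants c > 0 and x₀ > 0 such that for all z with Re z < 0 and all integers n ≥ 0, max{ ‖𝐞ₙ(z)‖ , ‖Eₙ(z)‖ } ≤ (x₀ − c Re z)^{−n−1}.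 -/
open Matrix Real

lemma aux_det_bound {s : ℕ} (X : Matrix (Fin s) (Fin s) ℂ) (r : Fin s → ℝ)
    (hr : ∀ i, 0 ≤ r i) (h : ∀ i j, ‖X i j‖ ≤ r i) :
    ‖X.det‖ ≤ (s.factorial : ℝ) * ∏ i, r i := by
  rw [Matrix.det_apply]
  calc ‖∑ σ : Equiv.Perm (Fin s), Equiv.Perm.sign σ • ∏ i, X (σ i) i‖
      ≤ ∑ σ : Equiv.Perm (Fin s), ‖Equiv.Perm.sign σ • ∏ i, X (σ i) i‖ := norm_sum_le _ _
    _ ≤ ∑ _σ : Equiv.Perm (Fin s), ∏ i, r i := by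
        apply Finset.sum_le_sum
        intro σ _
        have h1 : ‖Equiv.Perm.sign σ • ∏ i, X (σ i) i‖ = ‖∏ i, X (σ i) i‖ := by
          rcases Int.units_eq_one_or (Equiv.Perm.sign σ) with hσ | hσ <;>
            simp [hσ, Units.smul_def]
        rw [h1]
        calc ‖∏ i, X (σ i) i‖ = ∏ i, ‖X (σ i) i‖ := norm_prod _ _
          _ ≤ ∏ i, r (σ i) :=
              Finset.prod_le_prod (fun _ _ => norm_nonneg _) (fun i _ => h _ _)
          _ = ∏ i, r i := Equiv.prod_comp σ r
    _ = (s.factorial : ℝ) * ∏ i, r i := by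
        rw [Finset.sum_const, Finset.card_univ, Fintype.card_perm, Fintype.card_fin,
          nsmul_eq_mul]

lemma aux_vec_norm_le {s : ℕ} (v : EuclideanSpace ℂ (Fin s)) (a : ℝ) (ha : 0 ≤ a)
    (h : ∀ i, ‖v i‖ ≤ a) : ‖v‖ ≤ s * a := by
  rw [EuclideanSpace.norm_eq]
  have h1 : (∑ i, ‖v i‖ ^ 2) ≤ (s : ℝ) * a ^ 2 := by
    calc (∑ i, ‖v i‖ ^ 2) ≤ ∑ _i : Fin s, a ^ 2 :=
          Finset.sum_le_sum (fun i _ => pow_le_pow_left₀ (norm_nonneg _) (h i) 2)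
      _ = (s : ℝ) * a ^ 2 := by simp [Finset.sum_const, Finset.card_univ]
  have h2 : (s : ℝ) * a ^ 2 ≤ ((s : ℝ) * a) ^ 2 := by
    have hss : (s : ℝ) ≤ (s : ℝ) ^ 2 := by
      have : s ≤ s ^ 2 := Nat.le_self_pow two_ne_zero s
      exact_mod_cast this
    nlinarith [sq_nonneg a]
  calc √(∑ i, ‖v i‖ ^ 2) ≤ √(((s : ℝ) * a) ^ 2) := by
        apply Real.sqrt_le_sqrt; linarith
    _ = (s : ℝ) * a := Real.sqrt_sq (by positivity)

lemma aux_coord_le {s : ℕ} (v : EuclideanSpace ℂ (Fin s)) (i : Fin s) : ‖v i‖ ≤ ‖v‖ := by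
  rw [EuclideanSpace.norm_eq]
  have h1 : ‖v i‖ ^ 2 ≤ ∑ j, ‖v j‖ ^ 2 :=
    Finset.single_le_sum (f := fun j => ‖v j‖ ^ 2) (fun _ _ => sq_nonneg _) (Finset.mem_univ i)
  calc ‖v i‖ = √(‖v i‖ ^ 2) := (Real.sqrt_sq (norm_nonneg _)).symm
    _ ≤ √(∑ j, ‖v j‖ ^ 2) := Real.sqrt_le_sqrt h1

lemma aux_clm_norm_le {s : ℕ} (X : Matrix (Fin s) (Fin s) ℂ) (a : ℝ) (ha : 0 ≤ a)
    (h : ∀ i j, ‖X i j‖ ≤ a) :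
    ‖Matrix.toEuclideanCLM (𝕜 := ℂ) X‖ ≤ (s : ℝ) ^ 2 * a := by
  apply ContinuousLinearMap.opNorm_le_bound _ (by positivity)
  intro v
  have key : ∀ i, ‖(Matrix.toEuclideanCLM (𝕜 := ℂ) X v) i‖ ≤ (s : ℝ) * a * ‖v‖ := by
    intro i
    have hco : (Matrix.toEuclideanCLM (𝕜 := ℂ) X v) i = ∑ j, X i j * v j := by
      have : Matrix.toEuclideanCLM (𝕜 := ℂ) X v
          = (WithLp.equiv 2 (Fin s → ℂ)).symm (Matrix.toLin' X (WithLp.equiv 2 (Fin s → ℂ) v)) := rfl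
      rw [this]
      simp [Matrix.toLin'_apply, Matrix.mulVec, dotProduct]
    rw [hco]
    calc ‖∑ j, X i j * v j‖ ≤ ∑ j, ‖X i j * v j‖ := norm_sum_le _ _
      _ ≤ ∑ _j : Fin s, a * ‖v‖ := by
          apply Finset.sum_le_sum
          intro j _
          rw [norm_mul]
          exact mul_le_mul (h i j) (aux_coord_le v j) (norm_nonneg _) ha
      _ = (s : ℝ) * a * ‖v‖ := by
          simp [Finset.sum_const, Finset.card_univ]
          ring
  calc ‖Matrix.toEuclideanCLM (𝕜 := ℂ) X v‖ ≤ (s : ℝ) * ((s : ℝ) * a * ‖v‖) :=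
        aux_vec_norm_le _ _ (by positivity) key
    _ = (s : ℝ) ^ 2 * a * ‖v‖ := by ring

lemma aux_prod_le (T : Multiset ℂ) (f g : ℂ → ℝ) (h0 : ∀ a ∈ T, 0 ≤ f a)
    (h : ∀ a ∈ T, f a ≤ g a) : (T.map f).prod ≤ (T.map g).prod := by
  induction T using Multiset.induction with
  | empty => simp
  | cons a T ih =>
    simp only [Multiset.map_cons, Multiset.prod_cons]
    have hfa := h0 a (Multiset.mem_cons_self a T)
    have h0' : ∀ x ∈ T, 0 ≤ f x := fun x hx => h0 x (Multiset.mem_cons_of_mem hx)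
    have h' : ∀ x ∈ T, f x ≤ g x := fun x hx => h x (Multiset.mem_cons_of_mem hx)
    have hprod : (0:ℝ) ≤ (T.map f).prod := by
      apply Multiset.prod_nonneg
      intro x hx
      obtain ⟨y, hy, rfl⟩ := Multiset.mem_map.mp hx
      exact h0' y hy
    exact mul_le_mul (h a (Multiset.mem_cons_self a T)) (ih h0' h') hprod
      (le_trans hfa (h a (Multiset.mem_cons_self a T)))

lemma aux_eval_charpoly {s : ℕ} (M : Matrix (Fin s) (Fin s) ℂ) (z : ℂ) :
    M.charpoly.eval z = (z • (1 : Matrix (Fin s) (Fin s) ℂ) - M).det := by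
  rw [Matrix.charpoly, eval_det, Matrix.matPolyEquiv_charmatrix]
  congr 1
  simp [Algebra.algebraMap_eq_smul_one, Matrix.scalar]

lemma aux_root_mem_spectrum {s : ℕ} (M : Matrix (Fin s) (Fin s) ℂ) (μ : ℂ)
    (hμ : μ ∈ M.charpoly.roots) : μ ∈ spectrum ℂ M := by
  have hp0 : M.charpoly ≠ 0 := M.charpoly_monic.ne_zero
  have hroot : M.charpoly.eval μ = 0 := (Polynomial.mem_roots hp0).mp hμ
  rw [aux_eval_charpoly] at hroot
  rw [spectrum.mem_iff]
  intro hunit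
  rw [show (algebraMap ℂ (Matrix (Fin s) (Fin s) ℂ)) μ - M = μ • 1 - M from by
    rw [Algebra.algebraMap_eq_smul_one], Matrix.isUnit_iff_isUnit_det, hroot] at hunit
  simp at hunit

lemma aux_norm_multiset_prod (T : Multiset ℂ) : ‖T.prod‖ = (T.map fun x => ‖x‖).prod := by
  induction T using Multiset.induction with
  | empty => simp
  | cons a T ih => simp [Multiset.prod_cons, norm_mul, ih]

/-- The row vector `eₙ(z) = r(z)ⁿ q(z)`. -/
noncomputable def rkE1 {s : ℕ} (A : Matrix (Fin s) (Fin s) ℝ) (b : Fin s → ℝ) (n : ℕ) (z : ℂ) :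
    EuclideanSpace ℂ (Fin s) :=
  (rkStab A b z) ^ n • rkQ A b z

/-- The matrices `E₀(z) = A(I - zA)⁻¹` and `Eₙ(z) = r(z)^{n-1}(I - zA)⁻¹𝟙 q(z)`, `n ≥ 1`. -/
noncomputable def rkEmat {s : ℕ} (A : Matrix (Fin s) (Fin s) ℝ) (b : Fin s → ℝ) (n : ℕ)
    (z : ℂ) : Matrix (Fin s) (Fin s) ℂ :=
  if n = 0 then cmat A * (1 - z • cmat A)⁻¹
  else (rkStab A b z) ^ (n - 1) •
    Matrix.vecMulVec ((1 - z • cmat A)⁻¹ *ᵥ (fun _ => 1))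
      (Matrix.vecMul (fun i => (b i : ℂ)) (1 - z • cmat A)⁻¹)

set_option maxHeartbeats 1000000 in
set_option synthInstance.maxHeartbeats 400000 in
theorem rk_en_En_decay_bounds
    (s : ℕ) (hs : 1 ≤ s)
    (A : Matrix (Fin s) (Fin s) ℝ) (hA : IsUnit A.det)
    (b : Fin s → ℝ)
    (hb : (fun i => ((b i : ℂ))) ⬝ᵥ ((cmat A)⁻¹ *ᵥ (fun _ => 1)) = 1)
    (heig : ∀ μ ∈ spectrum ℂ (cmat A)⁻¹, 0 < μ.re) :
    ∃ c x₀ : ℝ, 0 < c ∧ 0 < x₀ ∧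
      ∀ z : ℂ, z.re < 0 → ∀ n : ℕ,
        max ‖rkE1 A b n z‖ ‖(Matrix.toEuclideanCLM (𝕜 := ℂ)) (rkEmat A b n z)‖
          ≤ (x₀ - c * z.re) ^ (-(n : ℤ) - 1) := by
  set cA := cmat A with hcA
  have hdetA : IsUnit cA.det := by
    have : cA.det = Complex.ofRealHom A.det := (RingHom.map_det Complex.ofRealHom A).symm
    rw [this]
    exact hA.map Complex.ofRealHom
  set M := cA⁻¹ with hM
  have hAM : cA * M = 1 := Matrix.mul_nonsing_inv _ hdetA
  have hMA : M * cA = 1 := Matrix.nonsing_inv_mul _ hdetA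
  set p := M.charpoly with hp
  have hmonic : p.Monic := M.charpoly_monic
  have hdeg : p.natDegree = s := by
    rw [hp, Matrix.charpoly_natDegree_eq_dim, Fintype.card_fin]
  have hsplits : p.Splits := IsAlgClosed.splits p
  have hcard : p.roots.card = s := by
    rw [← hdeg]
    exact (Polynomial.splits_iff_card_roots.mp hsplits)
  have hroots_re : ∀ μ ∈ p.roots, 0 < μ.re := by
    intro μ hμ
    exact heig μ (aux_root_mem_spectrum M μ hμ)
  have hne : p.roots.toFinset.Nonempty := by
    rw [Multiset.toFinset_nonempty]
    intro h0
    rw [h0] at hcard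
    simp at hcard
    omega
  set δ := p.roots.toFinset.inf' hne Complex.re with hδdef
  set R := p.roots.toFinset.sup' hne (fun μ => ‖μ‖) with hRdef
  have hδpos : 0 < δ := by
    rw [hδdef, Finset.lt_inf'_iff]
    intro μ hμ
    exact hroots_re μ (Multiset.mem_toFinset.mp hμ)
  have hδle : ∀ μ ∈ p.roots, δ ≤ μ.re :=
    fun μ h => Finset.inf'_le _ (Multiset.mem_toFinset.mpr h)
  have hRle : ∀ μ ∈ p.roots, ‖μ‖ ≤ R :=
    fun μ h => Finset.le_sup' _ (Multiset.mem_toFinset.mpr h)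
  have hR0 : 0 ≤ R := by
    obtain ⟨μ0, hμ0⟩ := hne
    exact le_trans (norm_nonneg μ0) (Finset.le_sup' _ hμ0)
  set κ := δ / (1 + R + δ) with hκdef
  have hκpos : 0 < κ := div_pos hδpos (by linarith)
  have hκδ : κ * (1 + R + δ) = δ := by
    rw [hκdef]; field_simp
  set m := ∑ i, ∑ j, ‖cA i j‖ with hmdef
  have hm : ∀ i j, ‖cA i j‖ ≤ m := by
    intro i j
    calc ‖cA i j‖ ≤ ∑ j', ‖cA i j'‖ :=
          Finset.single_le_sum (f := fun j' => ‖cA i j'‖) (fun _ _ => norm_nonneg _)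
            (Finset.mem_univ j)
      _ ≤ m := Finset.single_le_sum (f := fun i' => ∑ j', ‖cA i' j'‖)
            (fun _ _ => Finset.sum_nonneg fun _ _ => norm_nonneg _) (Finset.mem_univ i)
  have hm0 : 0 ≤ m := le_trans (norm_nonneg _) (hm ⟨0, hs⟩ ⟨0, hs⟩)
  set dA := ‖cA.det‖ with hdAdef
  have hdA : 0 < dA := by
    rw [hdAdef, norm_pos_iff]
    exact hdetA.ne_zero
  set β := ((s.factorial : ℝ) * (1 + m) ^ (s - 1)) / (dA * κ ^ s) with hβdef
  have hβpos : 0 < β := by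
    apply div_pos
    · exact mul_pos (by exact_mod_cast Nat.cast_pos.mpr s.factorial_pos)
        (pow_pos (by linarith) _)
    · exact mul_pos hdA (pow_pos hκpos s)
  -- per z facts
  have hzfacts : ∀ z : ℂ, z.re < 0 →
      IsUnit (1 - z • cA).det ∧ ∀ i j, ‖(1 - z • cA)⁻¹ i j‖ ≤ β / (1 + ‖z‖) := by
    intro z hz
    set D := 1 - z • cA with hDdef
    have hDfac : D = cA * (M - z • 1) := by
      rw [hDdef, Matrix.mul_sub, hAM, Matrix.mul_smul, mul_one]
    have hdetD : D.det = cA.det * (M - z • 1).det := by rw [hDfac, Matrix.det_mul]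
    -- factor bounds
    have hfac : ∀ μ ∈ p.roots, κ * (1 + ‖z‖) ≤ ‖z - μ‖ := by
      intro μ hμ
      have h1 : δ ≤ ‖z - μ‖ := by
        have : δ ≤ (μ - z).re := by
          have := hδle μ hμ
          simp only [Complex.sub_re]
          linarith
        calc δ ≤ (μ - z).re := this
          _ ≤ |(μ - z).re| := le_abs_self _
          _ ≤ ‖μ - z‖ := Complex.abs_re_le_norm _
          _ = ‖μ - z‖ := rfl
          _ = ‖z - μ‖ := norm_sub_rev _ _
      have h2 : ‖z‖ - R ≤ ‖z - μ‖ := by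
        have := norm_sub_norm_le z μ
        have := hRle μ hμ
        linarith
      have hnn : 0 ≤ ‖z - μ‖ := norm_nonneg _
      nlinarith [mul_le_mul_of_nonneg_left h1 (show (0:ℝ) ≤ 1 + R by linarith),
        mul_le_mul_of_nonneg_left h2 hδpos.le]
    -- determinant lower bound
    have hdetM : ‖(M - z • (1 : Matrix (Fin s) (Fin s) ℂ)).det‖
        = ((p.roots.map (fun μ => ‖z - μ‖)).prod) := by
      have h1 : (M - z • (1 : Matrix (Fin s) (Fin s) ℂ)) = -(z • 1 - M) := (neg_sub _ _).symm
      have h2 : (z • (1 : Matrix (Fin s) (Fin s) ℂ) - M).det = p.eval z :=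
        (aux_eval_charpoly M z).symm
      have h3 : p.eval z = ((p.roots.map (fun μ => z - μ)).prod) := by
        conv_lhs => rw [hsplits.eq_prod_roots_of_monic hmonic]
        rw [Polynomial.eval_multiset_prod, Multiset.map_map]
        congr 1
        apply Multiset.map_congr rfl
        intro μ _
        simp
      rw [h1, Matrix.det_neg, norm_mul, norm_pow, norm_neg, norm_one, one_pow, one_mul,
        h2, h3]
      rw [aux_norm_multiset_prod, Multiset.map_map]
      rfl
    have hprodlow : (κ * (1 + ‖z‖)) ^ s ≤ (p.roots.map (fun μ => ‖z - μ‖)).prod := by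
      have h0 : ∀ μ ∈ p.roots, (0:ℝ) ≤ (fun _ : ℂ => κ * (1 + ‖z‖)) μ := by
        intro μ _
        have h00 : (0:ℝ) ≤ ‖z‖ := norm_nonneg _
        exact mul_nonneg hκpos.le (by linarith)
      have := aux_prod_le p.roots (fun _ => κ * (1 + ‖z‖)) (fun μ => ‖z - μ‖) h0 hfac
      calc (κ * (1 + ‖z‖)) ^ s
          = (p.roots.map (fun _ : ℂ => κ * (1 + ‖z‖))).prod := by
            rw [Multiset.map_const', Multiset.prod_replicate, hcard]
        _ ≤ _ := this
    have hdetDlow : dA * (κ ^ s * (1 + ‖z‖) ^ s) ≤ ‖D.det‖ := by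
      rw [hdetD, norm_mul, ← hdAdef, hdetM, ← mul_pow]
      exact mul_le_mul_of_nonneg_left hprodlow hdA.le
    have hdetDpos : 0 < ‖D.det‖ := by
      apply lt_of_lt_of_le _ hdetDlow
      have h00 : (0:ℝ) ≤ ‖z‖ := norm_nonneg _
      exact mul_pos hdA (mul_pos (pow_pos hκpos s) (pow_pos (by linarith) s))
    have hunitD : IsUnit D.det := by
      rw [isUnit_iff_ne_zero]
      intro h0
      rw [h0] at hdetDpos
      simp at hdetDpos
    refine ⟨hunitD, ?_⟩
    intro i j
    have hadj : ‖D.adjugate i j‖ ≤ (s.factorial : ℝ) * ((1 + m) * (1 + ‖z‖)) ^ (s - 1) := by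
      rw [Matrix.adjugate_apply]
      have hnz : (0:ℝ) ≤ ‖z‖ := norm_nonneg _
      have hDent : ∀ k l, ‖D k l‖ ≤ (1 + m) * (1 + ‖z‖) := by
        intro k l
        have : D k l = (1 : Matrix (Fin s) (Fin s) ℂ) k l - z * cA k l := by
          rw [hDdef]
          simp [Matrix.sub_apply, Matrix.smul_apply, smul_eq_mul]
        rw [this]
        have h1 : ‖(1 : Matrix (Fin s) (Fin s) ℂ) k l‖ ≤ 1 := by
          rw [Matrix.one_apply]
          split <;> simp
        calc ‖(1 : Matrix (Fin s) (Fin s) ℂ) k l - z * cA k l‖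
            ≤ ‖(1 : Matrix (Fin s) (Fin s) ℂ) k l‖ + ‖z * cA k l‖ := norm_sub_le _ _
          _ ≤ 1 + ‖z‖ * m := by
              rw [norm_mul]
              have := hm k l
              have := mul_le_mul_of_nonneg_left (hm k l) hnz
              linarith
          _ ≤ (1 + m) * (1 + ‖z‖) := by nlinarith
      have hbound := aux_det_bound (D.updateRow j (Pi.single i 1))
        (fun k => if k = j then 1 else (1 + m) * (1 + ‖z‖))
        (by intro k; split
            · norm_num
            · nlinarith)
        (by intro k l
            rw [Matrix.updateRow_apply]
            by_cases hkj : k = j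
            · rw [if_pos hkj, if_pos hkj]
              rcases eq_or_ne l i with h | h
              · rw [h]; simp
              · simp [Pi.single_apply, h]
            · rw [if_neg hkj, if_neg hkj]
              exact hDent k l)
      have hprodr : (∏ k, if k = j then (1:ℝ) else (1 + m) * (1 + ‖z‖))
          = ((1 + m) * (1 + ‖z‖)) ^ (s - 1) := by
        rw [← Finset.mul_prod_erase Finset.univ _ (Finset.mem_univ j)]
        rw [if_pos rfl, one_mul]
        rw [Finset.prod_congr rfl (fun k hk => if_neg (Finset.ne_of_mem_erase hk))]
        rw [Finset.prod_const, Finset.card_erase_of_mem (Finset.mem_univ j),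
          Finset.card_univ, Fintype.card_fin]
      rw [hprodr] at hbound
      exact hbound
    have hentry : ‖D⁻¹ i j‖ = ‖D.adjugate i j‖ / ‖D.det‖ := by
      rw [Matrix.inv_def, Matrix.smul_apply, smul_eq_mul, norm_mul, Ring.inverse_eq_inv,
        norm_inv]
      ring
    rw [hentry]
    have step1 : ‖D.adjugate i j‖ / ‖D.det‖
        ≤ ((s.factorial : ℝ) * ((1 + m) * (1 + ‖z‖)) ^ (s - 1))
          / (dA * (κ ^ s * (1 + ‖z‖) ^ s)) := by
      apply div_le_div₀ _ hadj _ hdetDlow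
      · have hnz : (0:ℝ) ≤ ‖z‖ := norm_nonneg _
        have h00 : (0:ℝ) ≤ (1 + m) * (1 + ‖z‖) := by nlinarith
        exact mul_nonneg (Nat.cast_nonneg _) (pow_nonneg h00 _)
      · have hnz : (0:ℝ) ≤ ‖z‖ := norm_nonneg _
        exact mul_pos hdA (mul_pos (pow_pos hκpos s) (pow_pos (by linarith) s))
    apply le_trans step1
    apply le_of_eq
    have hnz : (0:ℝ) ≤ ‖z‖ := norm_nonneg _
    have hupow : (1 + ‖z‖) ^ s = (1 + ‖z‖) ^ (s - 1) * (1 + ‖z‖) := by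
      conv_lhs => rw [show s = (s - 1) + 1 from (Nat.succ_pred_eq_of_pos hs).symm]
      rw [pow_succ]
    rw [mul_pow, hupow, hβdef]
    have h1z : (0:ℝ) < 1 + ‖z‖ := by linarith
    field_simp
  -- constants
  set bC : Fin s → ℂ := fun i => ((b i : ℂ)) with hbC
  set w := M *ᵥ (fun _ => (1:ℂ)) with hwdef
  set bb := ∑ i, ‖bC i‖ with hbbdef
  have hbble : ∀ i, ‖bC i‖ ≤ bb :=
    fun i => Finset.single_le_sum (f := fun i => ‖bC i‖) (fun _ _ => norm_nonneg _)
      (Finset.mem_univ i)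
  have hbb0 : 0 ≤ bb := Finset.sum_nonneg fun _ _ => norm_nonneg _
  set W := ∑ j, ‖w j‖ with hWdef
  have hWle : ∀ j, ‖w j‖ ≤ W :=
    fun j => Finset.single_le_sum (f := fun j => ‖w j‖) (fun _ _ => norm_nonneg _)
      (Finset.mem_univ j)
  have hW0 : 0 ≤ W := Finset.sum_nonneg fun _ _ => norm_nonneg _
  set Cq := (s:ℝ) * bb * β with hCq
  set Cr := bb * W * β with hCr
  set C0 := (s:ℝ)^2 * m * β with hC0
  set Cm := (s:ℝ)^2 * ((s:ℝ) * β * (bb * β)) with hCm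
  set γ := max 1 (max Cq (max Cr (max C0 Cm))) with hγdef
  have hγ1 : (1:ℝ) ≤ γ := le_max_left _ _
  have hγq : Cq ≤ γ := le_trans (le_max_left _ _) (le_max_right _ _)
  have hγr : Cr ≤ γ := le_trans (le_trans (le_max_left _ _) (le_max_right _ _)) (le_max_right _ _)
  have hγ0 : C0 ≤ γ :=
    le_trans (le_trans (le_trans (le_max_left _ _) (le_max_right _ _)) (le_max_right _ _))
      (le_max_right _ _)
  have hγm : Cm ≤ γ :=
    le_trans (le_trans (le_trans (le_max_right _ _) (le_max_right _ _)) (le_max_right _ _))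
      (le_max_right _ _)
  have hγpos : (0:ℝ) < γ := lt_of_lt_of_le one_pos hγ1
  refine ⟨1/γ, 1/γ, one_div_pos.mpr hγpos, one_div_pos.mpr hγpos, ?_⟩
  intro z hz n
  obtain ⟨hunitD, hBij⟩ := hzfacts z hz
  set x := 1 - z.re with hxdef
  have hxpos : (0:ℝ) < x := by rw [hxdef]; linarith
  have hx1 : (1:ℝ) ≤ x := by rw [hxdef]; linarith
  have hxz : x ≤ 1 + ‖z‖ := by
    have h1 : -z.re ≤ |z.re| := neg_le_abs z.re
    have h2 : |z.re| ≤ ‖z‖ := Complex.abs_re_le_norm z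
    have h3 : ‖z‖ = ‖z‖ := rfl
    rw [hxdef]; linarith
  set B := (1 - z • cA)⁻¹ with hBdef
  have hBij' : ∀ i j, ‖B i j‖ ≤ β / x := by
    intro i j
    refine le_trans (hBij i j) ?_
    exact div_le_div_of_nonneg_left hβpos.le hxpos hxz
  -- bound on q entries
  have hq : ∀ jj, ‖Matrix.vecMul bC B jj‖ ≤ bb * (β / x) := by
    intro jj
    have h1 : Matrix.vecMul bC B jj = ∑ i, bC i * B i jj := by
      simp [Matrix.vecMul, dotProduct]
    rw [h1]
    calc ‖∑ i, bC i * B i jj‖ ≤ ∑ i, ‖bC i * B i jj‖ := norm_sum_le _ _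
      _ ≤ ∑ i, ‖bC i‖ * (β / x) := by
          apply Finset.sum_le_sum
          intro i _
          rw [norm_mul]
          exact mul_le_mul_of_nonneg_left (hBij' i jj) (norm_nonneg _)
      _ = bb * (β / x) := by rw [← Finset.sum_mul]
  have hβx0 : (0:ℝ) ≤ β / x := div_nonneg hβpos.le hxpos.le
  have hqnorm : ‖rkQ A b z‖ ≤ Cq / x := by
    have h1 : ∀ jj, ‖(rkQ A b z) jj‖ ≤ bb * (β / x) := by
      intro jj
      have : (rkQ A b z) jj = Matrix.vecMul bC B jj := by
        simp only [rkQ, ← hcA, ← hbC, ← hBdef]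
        rfl
      rw [this]
      exact hq jj
    refine le_trans (aux_vec_norm_le _ _ (mul_nonneg hbb0 hβx0) h1) (le_of_eq ?_)
    rw [hCq]; ring
  -- bound on B *ᵥ 1 entries
  have hB1 : ∀ i, ‖(B *ᵥ (fun _ => (1:ℂ))) i‖ ≤ (s:ℝ) * (β / x) := by
    intro i
    have h1 : (B *ᵥ (fun _ => (1:ℂ))) i = ∑ j, B i j := by
      simp [Matrix.mulVec, dotProduct]
    rw [h1]
    calc ‖∑ j, B i j‖ ≤ ∑ j, ‖B i j‖ := norm_sum_le _ _
      _ ≤ ∑ _j : Fin s, (β / x) := Finset.sum_le_sum fun j _ => hBij' i j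
      _ = (s:ℝ) * (β / x) := by
          rw [Finset.sum_const, Finset.card_univ, Fintype.card_fin, nsmul_eq_mul]
  -- stability function identity
  have hBD : B * (1 - z • cA) = 1 := Matrix.nonsing_inv_mul _ hunitD
  have h2 : z • (B * cA) = B - 1 := by
    rw [Matrix.mul_sub, Matrix.mul_one, Matrix.mul_smul] at hBD
    rw [← hBD]
    abel
  have hzB : z • B = (B - 1) * M := by
    calc z • B = z • (B * (cA * M)) := by rw [hAM, Matrix.mul_one]
      _ = z • ((B * cA) * M) := by rw [Matrix.mul_assoc]
      _ = (z • (B * cA)) * M := by rw [Matrix.smul_mul]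
      _ = (B - 1) * M := by rw [h2]
  have hrq : rkStab A b z = Matrix.vecMul bC B ⬝ᵥ w := by
    rw [rkStab, ← hcA, ← hbC, ← hBdef]
    have h3 : z * (bC ⬝ᵥ (B *ᵥ fun _ => 1)) = bC ⬝ᵥ ((z • B) *ᵥ fun _ => 1) := by
      rw [Matrix.smul_mulVec, dotProduct_smul, smul_eq_mul]
    rw [h3, hzB, ← Matrix.mulVec_mulVec, Matrix.sub_mulVec, Matrix.one_mulVec, ← hwdef,
      dotProduct_sub, hb, Matrix.dotProduct_mulVec]
    ring
  have hrbound : ‖rkStab A b z‖ ≤ Cr / x := by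
    rw [hrq]
    have h1 : Matrix.vecMul bC B ⬝ᵥ w = ∑ jj, Matrix.vecMul bC B jj * w jj := by
      simp [dotProduct]
    rw [h1]
    calc ‖∑ jj, Matrix.vecMul bC B jj * w jj‖
        ≤ ∑ jj, ‖Matrix.vecMul bC B jj * w jj‖ := norm_sum_le _ _
      _ ≤ ∑ jj, bb * (β / x) * ‖w jj‖ := by
          apply Finset.sum_le_sum
          intro jj _
          rw [norm_mul]
          exact mul_le_mul_of_nonneg_right (hq jj) (norm_nonneg _)
      _ = bb * (β / x) * W := by rw [← Finset.mul_sum]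
      _ = Cr / x := by rw [hCr]; ring
  -- E0 bound
  have hE0 : ‖Matrix.toEuclideanCLM (𝕜 := ℂ) (cA * B)‖ ≤ C0 / x := by
    have h1 : ∀ i j, ‖(cA * B) i j‖ ≤ m * (β / x) := by
      intro i j
      rw [Matrix.mul_apply]
      calc ‖∑ k, cA i k * B k j‖ ≤ ∑ k, ‖cA i k * B k j‖ := norm_sum_le _ _
        _ ≤ ∑ k, ‖cA i k‖ * (β / x) := by
            apply Finset.sum_le_sum
            intro k _
            rw [norm_mul]
            exact mul_le_mul_of_nonneg_left (hBij' k j) (norm_nonneg _)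
        _ = (∑ k, ‖cA i k‖) * (β / x) := by rw [← Finset.sum_mul]
        _ ≤ m * (β / x) := by
            apply mul_le_mul_of_nonneg_right _ hβx0
            exact Finset.single_le_sum (f := fun i' => ∑ j', ‖cA i' j'‖)
              (fun _ _ => Finset.sum_nonneg fun _ _ => norm_nonneg _) (Finset.mem_univ i)
    refine le_trans (aux_clm_norm_le _ _ (mul_nonneg hm0 hβx0) h1) (le_of_eq ?_)
    rw [hC0]; ring
  -- vecMulVec bound
  have hCmx : (s:ℝ)^2 * ((s:ℝ) * (β / x) * (bb * (β / x))) = Cm / x^2 := by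
    calc (s:ℝ)^2 * ((s:ℝ) * (β / x) * (bb * (β / x)))
        = ((s:ℝ)^2 * ((s:ℝ) * β * (bb * β))) * (x⁻¹ * x⁻¹) := by ring
      _ = ((s:ℝ)^2 * ((s:ℝ) * β * (bb * β))) / x^2 := by
          rw [← mul_inv, ← sq, div_eq_mul_inv]
      _ = Cm / x^2 := by rw [hCm]
  have hCmle : Cm / x^2 ≤ (γ/x)^2 := by
    rw [div_pow]
    exact (div_le_div_iff_of_pos_right (pow_pos hxpos 2)).mpr (le_trans hγm (by nlinarith))
  have hEm : ‖Matrix.toEuclideanCLM (𝕜 := ℂ)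
      (Matrix.vecMulVec (B *ᵥ (fun _ => (1:ℂ))) (Matrix.vecMul bC B))‖ ≤ Cm / x^2 := by
    have h1 : ∀ i j, ‖Matrix.vecMulVec (B *ᵥ (fun _ => (1:ℂ))) (Matrix.vecMul bC B) i j‖
        ≤ ((s:ℝ) * (β / x)) * (bb * (β / x)) := by
      intro i j
      rw [Matrix.vecMulVec_apply, norm_mul]
      exact mul_le_mul (hB1 i) (hq j) (norm_nonneg _)
        (mul_nonneg (Nat.cast_nonneg _) hβx0)
    refine le_trans (aux_clm_norm_le _ _
      (mul_nonneg (mul_nonneg (Nat.cast_nonneg _) hβx0) (mul_nonneg hbb0 hβx0)) h1)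
      (le_of_eq hCmx)
  -- final assembly
  have hbase : 1/γ - 1/γ * z.re = x / γ := by rw [hxdef]; ring
  rw [hbase]
  have hpow : (x/γ) ^ (-(n:ℤ)-1) = (γ/x) ^ (n+1) := by
    rw [show -(n:ℤ)-1 = -((n+1 : ℕ) : ℤ) by push_cast; ring]
    rw [_root_.zpow_neg, zpow_natCast, ← inv_pow, inv_div]
  rw [hpow]
  have hγx0 : (0:ℝ) ≤ γ / x := div_nonneg hγpos.le hxpos.le
  have hrγ : ‖rkStab A b z‖ ≤ γ / x := le_trans hrbound ((div_le_div_iff_of_pos_right hxpos).mpr hγr)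
  apply max_le
  · -- e_n bound
    rw [rkE1, norm_smul, norm_pow]
    calc ‖rkStab A b z‖ ^ n * ‖rkQ A b z‖
        ≤ (γ/x) ^ n * (γ/x) := by
          apply mul_le_mul (pow_le_pow_left₀ (norm_nonneg _) hrγ n)
            (le_trans hqnorm ((div_le_div_iff_of_pos_right hxpos).mpr hγq)) (norm_nonneg _) (pow_nonneg hγx0 n)
      _ = (γ/x) ^ (n+1) := (pow_succ _ n).symm
  · -- E_n bound
    cases n with
    | zero =>
      rw [rkEmat, if_pos rfl, ← hcA, ← hBdef]
      refine le_trans hE0 (le_trans ((div_le_div_iff_of_pos_right hxpos).mpr hγ0) (le_of_eq ?_))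
      rw [pow_succ, pow_zero, one_mul]
    | succ k =>
      rw [rkEmat, if_neg (Nat.succ_ne_zero k), ← hcA, ← hbC, ← hBdef, Nat.succ_sub_one]
      have hent : ∀ i j, ‖(rkStab A b z ^ k •
          Matrix.vecMulVec (B *ᵥ (fun _ => (1:ℂ))) (Matrix.vecMul bC B)) i j‖
          ≤ (γ/x)^k * ((s:ℝ) * (β / x) * (bb * (β / x))) := by
        intro i j
        rw [Matrix.smul_apply, smul_eq_mul, norm_mul, norm_pow]
        refine mul_le_mul (pow_le_pow_left₀ (norm_nonneg _) hrγ k) ?_ (norm_nonneg _)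
          (pow_nonneg hγx0 k)
        rw [Matrix.vecMulVec_apply, norm_mul]
        exact mul_le_mul (hB1 i) (hq j) (norm_nonneg _)
          (mul_nonneg (Nat.cast_nonneg _) hβx0)
      refine le_trans (aux_clm_norm_le _ _ ?_ hent) ?_
      · exact mul_nonneg (pow_nonneg hγx0 k)
          (mul_nonneg (mul_nonneg (Nat.cast_nonneg _) hβx0) (mul_nonneg hbb0 hβx0))
      · calc (s:ℝ)^2 * ((γ/x)^k * ((s:ℝ) * (β / x) * (bb * (β / x))))
            = (γ/x)^k * ((s:ℝ)^2 * ((s:ℝ) * (β / x) * (bb * (β / x)))) := by ring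
          _ = (γ/x)^k * (Cm / x^2) := by rw [hCmx]
          _ ≤ (γ/x)^k * ((γ/x)^2) := mul_le_mul_of_nonneg_left hCmle (pow_nonneg hγx0 k)
          _ = (γ/x)^(k+1+1) := by rw [← pow_add]
end
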